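/- Let n ≥ 1 and k ∈ I_n with binary expansion k = (k_1,…,k_n)_2, and write σ̂_n(k) = (k'_1,…,k'_n)_2 for the binary expansion of its image. Then k'_n = k_n, and for every κ with 1 ≤ κ ≤ n−1, k'_κ ≡ 1 + Σ_{i=1}^{n−κ+1} k_{κ+i−1} · g_i^{(n−κ+1)} (mod 2). -/

import Mathlib

/-- The Sierpinski gasket pattern: `g n m` is `g_m^{(n)} ∈ {0,1}` for `1 ≤ m ≤ n`,
defined by `g_1^{(n)} = g_n^{(n)} = 1` and
`g_m^{(n)} = g_{m-1}^{(n-1)} + g_m^{(n-1)} mod 2` for `2 ≤ m ≤ n−1`. -/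
def g : ℕ → ℕ → ℕ
  | 0, _ => 0
  | n + 1, m =>
    if m = 1 ∨ m = n + 1 then 1
    else if 2 ≤ m ∧ m ≤ n then (g n (m - 1) + g n m) % 2
    else 0

/-- The doubling operators `T_0` and `T_1` on binary tuples. -/
def Tmap (α : ℕ) (s : List ℕ) : List ℕ :=
  if α = 0 then s ++ s else s ++ s.map (fun x => 1 - x)

/-- The binary tuple `ν⁽ⁿ⁾ = (T_{g_1^{(n)}} ∘ T_{g_2^{(n)}} ∘ ⋯ ∘ T_{g_{n-1}^{(n)}})(0)`,
of length `2^{n-1}`. -/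
def nuList (n : ℕ) : List ℕ :=
  (List.range (n - 1)).foldr (fun i acc => Tmap (g n (i + 1)) acc) [0]

/-- The entry `ν_m^{(n)}`. -/
def nu (n m : ℕ) : ℕ := (nuList n).getD m 0

/-- The map `σ̂_n` on `I_n = {0, …, 2ⁿ−1}`: `σ̂_1 = id` and
`σ̂_n(j) = σ̂_{n-1}(j mod 2^{n-1}) + 2^{n-1}·c_j` where `c_{2m} = 1 − ν_m^{(n)}` and
`c_{2m+1} = ν_m^{(n)}`. -/
def sigmaHat : ℕ → ℕ → ℕ
  | 0, j => j
  | 1, j => j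
  | n + 2, j =>
    sigmaHat (n + 1) (j % 2 ^ (n + 1)) +
      2 ^ (n + 1) * (if j % 2 = 0 then 1 - nu (n + 2) (j / 2) else nu (n + 2) (j / 2))
/-- The `j`-th binary digit (`1 ≤ j ≤ n`, most significant first) of `c ∈ {0, …, 2ⁿ−1}`:
`c = Σ_{j=1}^n c_j 2^{n−j}`. -/
def digit (n c j : ℕ) : ℕ := c / 2 ^ (n - j) % 2

/-! Each `T_α` appends a copy of the word, complemented iff `α = 1`; so in
`(T_{f 1} ∘ ⋯ ∘ T_{f L})(0)` the leading binary digit of the position `m` toggles the entry by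
`f 1`, and the entry at `m` is the parity of `∑ᵢ mᵢ f i`. In particular
`ν_m^{(n)} ≡ ∑_{i<n} mᵢ g_i^{(n)}`, and since `g_n^{(n)} = 1` the top digit
`c_k ≡ 1 + k_n + ν_{⌊k/2⌋}^{(n)}` of `σ̂_n(k)` is `1 + ∑_{i ≤ n} kᵢ g_i^{(n)}`.
The lower digits of `σ̂_n(k)` are those of `σ̂_{n-1}(k mod 2^{n-1})`, and induction on `n`
gives the rest. -/

lemma Finset.sum_Icc_one_eq_sum_range {M : Type*} [AddCommMonoid M] (f : ℕ → M) (L : ℕ) :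
    ∑ i ∈ Finset.Icc 1 L, f i = ∑ i ∈ Finset.range L, f (i + 1) := by
  rw [← Finset.Ico_add_one_right_eq_Icc, Finset.sum_Ico_eq_sum_range, Nat.add_sub_cancel]
  simp only [add_comm]

lemma digit_self (n m : ℕ) : digit n m n = m % 2 := by
  simp [digit]

lemma digit_succ_one (L m : ℕ) : digit (L + 1) m 1 = m / 2 ^ L % 2 := rfl

lemma digit_succ_of_le {L i : ℕ} (m : ℕ) (hi : i ≤ L) :
    digit (L + 1) m i = digit L (m / 2) i := by
  rw [digit, digit, Nat.div_div_eq_div_mul, ← pow_succ', Nat.sub_add_comm hi]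

lemma digit_succ_succ {L j : ℕ} (m : ℕ) (hj : 1 ≤ j) (hjL : j ≤ L) :
    digit (L + 1) m (j + 1) = digit L (m % 2 ^ L) j := by
  have hsplit : 2 ^ L = 2 ^ (L - j) * 2 ^ j := by
    rw [← pow_add, Nat.sub_add_cancel hjL]
  rw [digit, digit, hsplit, Nat.mod_mul_right_div_self,
    Nat.mod_mod_of_dvd _ (dvd_pow_self 2 (by omega))]
  simp

lemma digit_succ_one_add_two_pow_mul {L r c : ℕ} (hr : r < 2 ^ L) (hc : c ≤ 1) :
    digit (L + 1) (r + 2 ^ L * c) 1 = c := by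
  rw [digit_succ_one, Nat.add_mul_div_left _ _ (by positivity), Nat.div_eq_of_lt hr]
  omega

lemma digit_succ_succ_add_two_pow_mul {L r j : ℕ} (c : ℕ) (hr : r < 2 ^ L) (hj : 1 ≤ j)
    (hjL : j ≤ L) : digit (L + 1) (r + 2 ^ L * c) (j + 1) = digit L r j := by
  rw [digit_succ_succ _ hj hjL, Nat.add_mul_mod_self_left, Nat.mod_eq_of_lt hr]

lemma length_Tmap (a : ℕ) (s : List ℕ) : (Tmap a s).length = 2 * s.length := by
  unfold Tmap; split <;> simp <;> omega

lemma Tmap_getD {a b j : ℕ} {s : List ℕ} (ha : a ≤ 1) (hb : b ≤ 1) (hj : j < s.length)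
    (hs : s.getD j 0 ≤ 1) : (Tmap a s).getD (s.length * b + j) 0 = (a * b + s.getD j 0) % 2 := by
  interval_cases b
  · rw [mul_zero, zero_add, mul_zero, zero_add, Nat.mod_eq_of_lt (by omega)]
    unfold Tmap
    split <;> exact List.getD_append _ _ _ _ hj
  · rw [mul_one, mul_one]
    unfold Tmap
    split_ifs with ha0
    · rw [List.getD_append_right _ _ _ _ (by omega), Nat.add_sub_cancel_left, ha0]
      omega
    · rw [List.getD_append_right _ _ _ _ (by omega), Nat.add_sub_cancel_left,
        List.getD_eq_getElem _ _ (by simpa using hj), List.getElem_map]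
      rw [List.getD_eq_getElem _ _ hj] at hs ⊢
      omega

/-- `tmapComp f L = (T_{f 1} ∘ ⋯ ∘ T_{f L})(0)`. -/
def tmapComp (f : ℕ → ℕ) (L : ℕ) : List ℕ :=
  (List.range L).foldr (fun i acc => Tmap (f (i + 1)) acc) [0]

lemma tmapComp_succ (f : ℕ → ℕ) (L : ℕ) :
    tmapComp f (L + 1) = Tmap (f 1) (tmapComp (fun i => f (i + 1)) L) := by
  rw [tmapComp, List.range_succ_eq_map, List.foldr_cons, List.foldr_map]
  rfl

lemma length_tmapComp (f : ℕ → ℕ) (L : ℕ) : (tmapComp f L).length = 2 ^ L := by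
  induction L generalizing f with
  | zero => rfl
  | succ L ih => rw [tmapComp_succ, length_Tmap, ih, pow_succ']

lemma tmapComp_getD {f : ℕ → ℕ} (hf : ∀ i, f i ≤ 1) {L m : ℕ} (hm : m < 2 ^ L) :
    (tmapComp f L).getD m 0 = (∑ i ∈ Finset.Icc 1 L, digit L m i * f i) % 2 := by
  induction L generalizing f m with
  | zero => simp_all [tmapComp]
  | succ L ih =>
    set s := tmapComp (fun i => f (i + 1)) L
    have hs : s.length = 2 ^ L := length_tmapComp _ L
    have hb : m / 2 ^ L ≤ 1 :=
      Nat.le_of_lt_succ (Nat.div_lt_of_lt_mul (by rw [pow_succ] at hm; omega))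
    have hr : m % 2 ^ L < 2 ^ L := Nat.mod_lt _ (by positivity)
    have hsr := ih (fun i => hf (i + 1)) hr
    have hm' : m = s.length * (m / 2 ^ L) + m % 2 ^ L := by rw [hs, Nat.div_add_mod]
    have hsum : ∑ i ∈ Finset.Icc 1 (L + 1), digit (L + 1) m i * f i
        = ∑ i ∈ Finset.Icc 1 L, digit L (m % 2 ^ L) i * f (i + 1) + m / 2 ^ L * f 1 := by
      rw [Finset.sum_Icc_one_eq_sum_range, Finset.sum_range_succ',
        Finset.sum_Icc_one_eq_sum_range, digit_succ_one,
        Nat.mod_eq_of_lt (a := m / 2 ^ L) (by omega)]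
      refine congrArg (· + _) (Finset.sum_congr rfl fun i hi => ?_)
      rw [digit_succ_succ m (by omega) (by simp at hi; omega)]
    rw [tmapComp_succ, hm', Tmap_getD (hf 1) hb (hs ▸ hr) (by rw [hsr]; omega), hsr, ← hm',
      hsum, mul_comm (f 1)]
    omega

lemma g_le_one (n m : ℕ) : g n m ≤ 1 := by
  cases n with
  | zero => simp [g]
  | succ n =>
    unfold g
    split_ifs <;> omega

lemma g_succ_self (n : ℕ) : g (n + 1) (n + 1) = 1 := by
  simp [g]

lemma nu_eq_sum {n m : ℕ} (hm : m < 2 ^ (n - 1)) :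
    nu n m = (∑ i ∈ Finset.Icc 1 (n - 1), digit (n - 1) m i * g n i) % 2 :=
  tmapComp_getD (g_le_one n) hm

lemma nu_le_one (n m : ℕ) : nu n m ≤ 1 := by
  by_cases hm : m < 2 ^ (n - 1)
  · rw [nu_eq_sum hm]
    omega
  · have hlen : (nuList n).length = 2 ^ (n - 1) := length_tmapComp _ _
    rw [nu, List.getD_eq_default _ _ (by omega)]
    omega

/-- The top binary digit `c_j` that `σ̂_n` attaches to `j`. -/
def sigmaHatTopBit (n j : ℕ) : ℕ :=
  if j % 2 = 0 then 1 - nu n (j / 2) else nu n (j / 2)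

lemma sigmaHat_succ_succ (n j : ℕ) :
    sigmaHat (n + 2) j
      = sigmaHat (n + 1) (j % 2 ^ (n + 1)) + 2 ^ (n + 1) * sigmaHatTopBit (n + 2) j := by
  rw [sigmaHat, sigmaHatTopBit]

lemma sigmaHatTopBit_eq (n j : ℕ) : sigmaHatTopBit n j = (1 + j % 2 + nu n (j / 2)) % 2 := by
  have := nu_le_one n (j / 2)
  unfold sigmaHatTopBit
  split_ifs <;> omega

lemma sigmaHatTopBit_le_one (n j : ℕ) : sigmaHatTopBit n j ≤ 1 := by
  rw [sigmaHatTopBit_eq]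
  omega

lemma sigmaHat_lt : ∀ {n k : ℕ}, k < 2 ^ n → sigmaHat n k < 2 ^ n
  | 0, _, hk | 1, _, hk => hk
  | n + 2, k, _ => by
    have hlow := sigmaHat_lt (Nat.mod_lt k (Nat.two_pow_pos (n + 1)))
    have htop := sigmaHatTopBit_le_one (n + 2) k
    rw [sigmaHat_succ_succ, pow_succ 2 (n + 1)]
    interval_cases sigmaHatTopBit (n + 2) k <;> omega

lemma sigmaHat_mod_two : ∀ n k : ℕ, sigmaHat n k % 2 = k % 2
  | 0, _ | 1, _ => rfl
  | n + 2, k => by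
    rw [sigmaHat_succ_succ, pow_succ', mul_assoc, Nat.add_mul_mod_self_left, sigmaHat_mod_two,
      Nat.mod_mul_right_mod]

lemma digit_one_sigmaHat {n k : ℕ} (hk : k < 2 ^ (n + 2)) :
    digit (n + 2) (sigmaHat (n + 2) k) 1
      = (1 + ∑ i ∈ Finset.Icc 1 (n + 2), digit (n + 2) k i * g (n + 2) i) % 2 := by
  have hk2 : k / 2 < 2 ^ (n + 1) := Nat.div_lt_of_lt_mul (by rw [pow_succ] at hk; omega)
  have hnu : nu (n + 2) (k / 2)
      = (∑ i ∈ Finset.Icc 1 (n + 1), digit (n + 1) (k / 2) i * g (n + 2) i) % 2 :=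
    nu_eq_sum hk2
  have hsum : ∑ i ∈ Finset.Icc 1 (n + 1), digit (n + 2) k i * g (n + 2) i
      = ∑ i ∈ Finset.Icc 1 (n + 1), digit (n + 1) (k / 2) i * g (n + 2) i :=
    Finset.sum_congr rfl fun i hi => by rw [digit_succ_of_le k (Finset.mem_Icc.mp hi).2]
  have hr := sigmaHat_lt (Nat.mod_lt k (Nat.two_pow_pos (n + 1)))
  rw [sigmaHat_succ_succ, digit_succ_one_add_two_pow_mul hr (sigmaHatTopBit_le_one _ _),
    sigmaHatTopBit_eq, hnu, Finset.sum_Icc_succ_top (b := n + 1) (by omega), hsum, g_succ_self,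
    digit_self]
  omega

lemma digit_sigmaHat : ∀ {n k κ : ℕ}, k < 2 ^ n → 1 ≤ κ → κ < n →
    digit n (sigmaHat n k) κ
      = (1 + ∑ i ∈ Finset.Icc 1 (n - κ + 1), digit n k (κ + i - 1) * g (n - κ + 1) i) % 2
  | 0, _, _, _, h1, h2 | 1, _, _, _, h1, h2 => by omega
  | n + 2, k, 1, hk, _, _ => by
    simpa using digit_one_sigmaHat hk
  | n + 2, k, j + 2, hk, _, hj => by
    have hr := sigmaHat_lt (Nat.mod_lt k (Nat.two_pow_pos (n + 1)))
    rw [sigmaHat_succ_succ, digit_succ_succ_add_two_pow_mul _ hr (by omega) (by omega),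
      digit_sigmaHat (Nat.mod_lt k (by positivity)) (by omega) (by omega),
      show n + 1 - (j + 1) + 1 = n + 2 - (j + 2) + 1 by omega]
    refine congrArg (fun s => (1 + s) % 2) (Finset.sum_congr rfl fun i hi => ?_)
    have hi := Finset.mem_Icc.mp hi
    rw [show j + 2 + i - 1 = j + i + 1 by omega, digit_succ_succ k (by omega) (by omega),
      show j + 1 + i - 1 = j + i by omega]

theorem sigmaHat_digits_general (n k : ℕ) (hk : k < 2 ^ n) :
    digit n (sigmaHat n k) n = digit n k n ∧
      ∀ κ, 1 ≤ κ → κ ≤ n - 1 →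
        digit n (sigmaHat n k) κ
          = (1 + ∑ i ∈ Finset.Icc 1 (n - κ + 1), digit n k (κ + i - 1) * g (n - κ + 1) i) % 2 :=
  ⟨by rw [digit_self, digit_self, sigmaHat_mod_two],
    fun _ hκ hκn => digit_sigmaHat hk hκ (by omega)⟩

/-- Let `k ∈ Iₙ` have binary digits `k_j` and let `σ̂ₙ(k)` have binary
digits `k'_j`. Then `k'_n = k_n` and for `1 ≤ κ ≤ n−1`,
`k'_κ ≡ 1 + Σ_{i=1}^{n−κ+1} k_{κ+i−1} g_i^{(n−κ+1)} (mod 2)`. -/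
theorem sigmaHat_digits (n k : ℕ) (hn : 1 ≤ n) (hk : k < 2 ^ n) :
    digit n (sigmaHat n k) n = digit n k n ∧
      ∀ κ, 1 ≤ κ → κ ≤ n - 1 →
        digit n (sigmaHat n k) κ
          = (1 + ∑ i ∈ Finset.Icc 1 (n - κ + 1), digit n k (κ + i - 1) * g (n - κ + 1) i) % 2 :=
  sigmaHat_digits_general n k hk
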